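/- arXiv:2510.17296 — 3 statements merged into one kernel-verified Lean document; each statement's English description precedes it below -/
import Mathlib

section
/- Let Z : (0,∞) → [0,∞) be a measurable function with Z ∈ L²(0,∞) and ∫₀^∞ Z(t)² dt ≤ Y for some constant Y > 0. Suppose there exist α ∈ (1,2), ζ > 0 and an open set M ⊂ (0,∞) such that (∫ₛ^∞ Z(t)² dt)^α ≤ ζ · Z(s)² for almost every s ∈ M. Then Z is integrable on M, and there exists a constant C = C(Y, α, ζ) > 0, independent of the set M, such that ∫_M Z(t) dt ≤ C. -/
/-!
Let `T s = ∫_{(s,∞)} Z²`; it is antitone and bounded by `Y`. Cut `M` into the bands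
`{Y/2^(i+1) < T ≤ Y/2^i}` and the set `{T = 0}`. Since the measure `Z² dt` has no atoms, the
`Z²`-mass of any set bounded below on which `T ≤ c` is at most `c`. On the `i`-th band the
hypothesis gives `Z ≥ m_i ≈ (Y/2^i)^(α/2)/√ζ`, so `∫ Z ≤ m_i⁻¹ ∫ Z² ≲ (Y/2^i)^(1 - α/2)`, a
geometric series since `α < 2`; on `{T = 0}` the mass bound forces `Z = 0` a.e.
-/

open MeasureTheory Set
open scoped ENNReal

section OrderMeasure

variable {X : Type*} [ConditionallyCompleteLinearOrder X] [TopologicalSpace X] [OrderTopology X]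
  [FirstCountableTopology X] [MeasurableSpace X]

theorem measure_le_of_forall_measure_Ioi_le {ν : Measure X} [NullSingletonClass ν] {S : Set X}
    {c : ℝ≥0∞} (hS : BddBelow S) (h : ∀ s ∈ S, ν (Ioi s) ≤ c) : ν S ≤ c := by
  rcases S.eq_empty_or_nonempty with rfl | hne
  · simp
  obtain ⟨u, hu_anti, hu_lim, huS⟩ := exists_seq_tendsto_sInf hne hS
  have hIoi : Ioi (sInf S) = ⋃ n, Ioi (u n) := by
    ext x
    simp only [mem_Ioi, mem_iUnion]
    exact ⟨fun hx => (hu_lim.eventually (gt_mem_nhds hx)).exists,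
      fun ⟨n, hn⟩ => (csInf_le hS (huS n)).trans_lt hn⟩
  calc ν S ≤ ν (Ici (sInf S)) := measure_mono fun x hx => csInf_le hS hx
    _ = ν (Ioi (sInf S)) := measure_congr Ioi_ae_eq_Ici.symm
    _ = ⨆ n, ν (Ioi (u n)) := by
        rw [hIoi]
        exact Monotone.measure_iUnion fun m n hmn => Ioi_subset_Ioi (hu_anti hmn)
    _ ≤ c := iSup_le fun n => h _ (huS n)

theorem setLIntegral_le_of_forall_setLIntegral_Ioi_le [OpensMeasurableSpace X] {μ : Measure X}
    [NullSingletonClass μ] (g : X → ℝ≥0∞) {S : Set X} {c : ℝ≥0∞} (hSm : MeasurableSet S)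
    (hS : BddBelow S) (h : ∀ s ∈ S, ∫⁻ t in Ioi s, g t ∂μ ≤ c) : ∫⁻ t in S, g t ∂μ ≤ c := by
  rw [← withDensity_apply _ hSm]
  refine measure_le_of_forall_measure_Ioi_le hS fun s hs => ?_
  rw [withDensity_apply _ measurableSet_Ioi]
  exact h s hs

end OrderMeasure

theorem lintegral_enorm_le_of_le_abs {X : Type*} [MeasurableSpace X] {μ : Measure X}
    {f : X → ℝ} {m : ℝ} (hm : 0 < m) (h : ∀ᵐ x ∂μ, m ≤ |f x|) :
    ∫⁻ x, ‖f x‖ₑ ∂μ ≤ ENNReal.ofReal m⁻¹ * ∫⁻ x, ENNReal.ofReal (f x ^ 2) ∂μ := by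
  rw [← lintegral_const_mul' _ _ ENNReal.ofReal_ne_top]
  refine lintegral_mono_ae (h.mono fun x hx => ?_)
  rw [Real.enorm_eq_ofReal_abs, ← ENNReal.ofReal_mul (inv_nonneg.2 hm.le), ← sq_abs,
    inv_mul_eq_div]
  refine ENNReal.ofReal_le_ofReal ((le_div_iff₀ hm).2 ?_)
  nlinarith [abs_nonneg (f x)]

theorem lintegral_enorm_eq_zero_of_lintegral_sq_eq_zero {X : Type*} [MeasurableSpace X]
    {μ : Measure X} {f : X → ℝ} (hf : AEMeasurable f μ)
    (h : ∫⁻ x, ENNReal.ofReal (f x ^ 2) ∂μ = 0) : ∫⁻ x, ‖f x‖ₑ ∂μ = 0 := by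
  rw [lintegral_eq_zero_iff' (hf.pow_const 2).ennreal_ofReal] at h
  rw [lintegral_eq_zero_iff' hf.enorm]
  filter_upwards [h] with x hx
  simpa [ENNReal.ofReal_eq_zero] using hx

theorem div_sqrt_rpow_div {a α ζ : ℝ} (ha : 0 < a) (hζ : 0 < ζ) :
    a / √(a ^ α / ζ) = √ζ * a ^ (1 - α / 2) := by
  rw [Real.sqrt_div' _ hζ.le, Real.sqrt_eq_rpow, ← Real.rpow_mul ha.le, Real.rpow_sub ha,
    Real.rpow_one]
  have := Real.rpow_pos_of_pos ha (α * (1 / 2))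
  have := Real.sqrt_pos.2 hζ
  field_simp

theorem exists_half_pow_lt_le_two_mul {x Y : ℝ} (hx : 0 < x) (hxY : x ≤ Y) :
    ∃ i : ℕ, Y / 2 * (1 / 2) ^ i < x ∧ x ≤ 2 * (Y / 2 * (1 / 2) ^ i) := by
  have hY : 0 < Y := hx.trans_le hxY
  obtain ⟨i, hi, hi'⟩ := exists_nat_pow_near_of_lt_one (div_pos hx hY)
    ((div_le_one hY).2 hxY) (by norm_num : (0 : ℝ) < 1 / 2) (by norm_num)
  rw [lt_div_iff₀ hY, pow_succ] at hi
  rw [div_le_iff₀ hY] at hi'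
  exact ⟨i, by linarith, by linarith⟩

theorem tsum_ofReal_mul_geometric {c ρ : ℝ} (hc : 0 ≤ c) (hρ0 : 0 ≤ ρ) (hρ : ρ < 1) :
    ∑' i : ℕ, ENNReal.ofReal (c * ρ ^ i) = ENNReal.ofReal (c / (1 - ρ)) := by
  rw [← ENNReal.ofReal_tsum_of_nonneg (fun i => by positivity)
    ((summable_geometric_of_lt_one hρ0 hρ).mul_left _), tsum_mul_left,
    tsum_geometric_of_lt_one hρ0 hρ, div_eq_mul_inv]

section Tail

variable {μ : Measure ℝ} [NullSingletonClass μ] {f : ℝ → ℝ} {α ζ : ℝ}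

theorem setLIntegral_enorm_le_of_band {S : Set ℝ} (hSm : MeasurableSet S) (hS : BddBelow S)
    (hζ : 0 < ζ) {a : ℝ} (ha : 0 < a)
    (htail : ∀ s ∈ S, ∫⁻ t in Ioi s, ENNReal.ofReal (f t ^ 2) ∂μ ≤ ENNReal.ofReal (2 * a))
    (h : ∀ᵐ s ∂μ.restrict S, a ^ α ≤ ζ * f s ^ 2) :
    ∫⁻ s in S, ‖f s‖ₑ ∂μ ≤ ENNReal.ofReal (2 * √ζ * a ^ (1 - α / 2)) := by
  set m := √(a ^ α / ζ)
  have hm : 0 < m := Real.sqrt_pos.2 (div_pos (Real.rpow_pos_of_pos ha α) hζ)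
  have hfm : ∀ᵐ s ∂μ.restrict S, m ≤ |f s| := h.mono fun s hs => by
    rw [← Real.sqrt_sq_eq_abs]
    exact Real.sqrt_le_sqrt ((div_le_iff₀ hζ).2 (by linarith))
  calc ∫⁻ s in S, ‖f s‖ₑ ∂μ
      ≤ ENNReal.ofReal m⁻¹ * ∫⁻ s in S, ENNReal.ofReal (f s ^ 2) ∂μ :=
        lintegral_enorm_le_of_le_abs hm hfm
    _ ≤ ENNReal.ofReal m⁻¹ * ENNReal.ofReal (2 * a) :=
        mul_le_mul_right (setLIntegral_le_of_forall_setLIntegral_Ioi_le _ hSm hS htail) _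
    _ = ENNReal.ofReal (2 * √ζ * a ^ (1 - α / 2)) := by
        rw [← ENNReal.ofReal_mul (inv_nonneg.2 hm.le), inv_mul_eq_div, mul_div_assoc,
          div_sqrt_rpow_div ha hζ, mul_assoc]

theorem lintegral_enorm_le_of_tail_rpow_le (hf : AEMeasurable f μ) {M : Set ℝ}
    (hM : MeasurableSet M) (hMb : BddBelow M) {Y : ℝ} (hY : 0 < Y) (hα0 : 0 ≤ α)
    (hα2 : α < 2) (hζ : 0 < ζ)
    (htail : ∀ s ∈ M, ∫⁻ t in Ioi s, ENNReal.ofReal (f t ^ 2) ∂μ ≤ ENNReal.ofReal Y)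
    (h : ∀ᵐ s ∂μ.restrict M,
      (∫⁻ t in Ioi s, ENNReal.ofReal (f t ^ 2) ∂μ).toReal ^ α ≤ ζ * f s ^ 2) :
    ∫⁻ s in M, ‖f s‖ₑ ∂μ ≤
      ENNReal.ofReal (2 * √ζ * (Y / 2) ^ (1 - α / 2) / (1 - (1 / 2) ^ (1 - α / 2))) := by
  set T : ℝ → ℝ≥0∞ := fun s => ∫⁻ t in Ioi s, ENNReal.ofReal (f t ^ 2) ∂μ
  have hT : Measurable T :=
    Antitone.measurable fun s t hst => lintegral_mono_set (Ioi_subset_Ioi hst)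
  have hT_top : ∀ s ∈ M, T s ≠ ⊤ := fun s hs =>
    ne_top_of_le_ne_top ENNReal.ofReal_ne_top (htail s hs)
  set w : ℕ → ℝ := fun i => Y / 2 * (1 / 2) ^ i
  set band : ℕ → Set ℝ := fun i => M ∩ {s | w i < (T s).toReal ∧ (T s).toReal ≤ 2 * w i}
  set null : Set ℝ := M ∩ {s | T s = 0}
  have hcover : M ⊆ null ∪ ⋃ i, band i := by
    intro s hs
    rcases eq_or_ne (T s) 0 with h0 | h0
    · exact Or.inl ⟨hs, h0⟩
    obtain ⟨i, hi⟩ := exists_half_pow_lt_le_two_mul (ENNReal.toReal_pos h0 (hT_top s hs))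
      ((ENNReal.le_ofReal_iff_toReal_le (hT_top s hs) hY.le).1 (htail s hs))
    exact Or.inr (mem_iUnion.2 ⟨i, hs, hi⟩)
  have hnull : ∫⁻ s in null, ‖f s‖ₑ ∂μ = 0 := by
    refine lintegral_enorm_eq_zero_of_lintegral_sq_eq_zero hf.restrict (nonpos_iff_eq_zero.1 ?_)
    exact setLIntegral_le_of_forall_setLIntegral_Ioi_le _
      (hM.inter (hT (measurableSet_singleton 0))) (hMb.mono inter_subset_left)
      fun s hs => hs.2.le
  set β := 1 - α / 2
  set ρ : ℝ := (1 / 2) ^ β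
  have hband : ∀ i, ∫⁻ s in band i, ‖f s‖ₑ ∂μ ≤
      ENNReal.ofReal (2 * √ζ * (Y / 2) ^ β * ρ ^ i) := by
    intro i
    have hw : 0 < w i := by positivity
    have hband_meas : MeasurableSet (band i) := hM.inter
      ((measurableSet_lt measurable_const hT.ennreal_toReal).inter
        (measurableSet_le hT.ennreal_toReal measurable_const))
    have hpow : w i ^ β = (Y / 2) ^ β * ρ ^ i := by
      rw [Real.mul_rpow (by positivity) (by positivity), Real.rpow_pow_comm (by norm_num)]
    rw [mul_assoc _ ((Y / 2) ^ β), ← hpow]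
    refine setLIntegral_enorm_le_of_band hband_meas (hMb.mono inter_subset_left) hζ hw
      (fun s hs => (ENNReal.le_ofReal_iff_toReal_le (hT_top s hs.1) (by positivity)).2 hs.2.2) ?_
    filter_upwards [ae_restrict_of_ae_restrict_of_subset inter_subset_left h,
      ae_restrict_mem hband_meas] with s hs hsb
    exact (Real.rpow_le_rpow hw.le hsb.2.1.le hα0).trans hs
  have hρ : ρ < 1 := Real.rpow_lt_one (by norm_num) (by norm_num) (by simp only [β]; linarith)
  calc ∫⁻ s in M, ‖f s‖ₑ ∂μ
      ≤ ∫⁻ s in null ∪ ⋃ i, band i, ‖f s‖ₑ ∂μ := lintegral_mono_set hcover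
    _ ≤ ∫⁻ s in null, ‖f s‖ₑ ∂μ + ∫⁻ s in ⋃ i, band i, ‖f s‖ₑ ∂μ := lintegral_union_le _ _ _
    _ ≤ 0 + ∑' i, ENNReal.ofReal (2 * √ζ * (Y / 2) ^ β * ρ ^ i) :=
        add_le_add hnull.le ((lintegral_iUnion_le _ _).trans (ENNReal.tsum_le_tsum hband))
    _ = ENNReal.ofReal (2 * √ζ * (Y / 2) ^ β / (1 - ρ)) := by
        rw [zero_add, tsum_ofReal_mul_geometric (by positivity) (by positivity) hρ]

end Tail

/-- **Feireisl–Simondon integrability lemma.**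
If `Z ≥ 0` is measurable on `(0,∞)`, `Z ∈ L²(0,∞)` with `∫₀^∞ Z² ≤ Y`, and there are
`α ∈ (1,2)`, `ζ > 0` and an open set `M ⊆ (0,∞)` such that
`(∫ₛ^∞ Z²)^α ≤ ζ Z(s)²` for a.e. `s ∈ M`, then `Z ∈ L¹(M)` and
`∫_M Z ≤ C` for a constant `C = C(Y, α, ζ)` independent of `M` (and of `Z`). -/
theorem stmt0 (Y α ζ : ℝ) (hY : 0 < Y) (hα1 : 1 < α) (hα2 : α < 2) (hζ : 0 < ζ) :
    ∃ C : ℝ, 0 < C ∧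
      ∀ (Z : ℝ → ℝ) (M : Set ℝ),
        Measurable Z →
        (∀ t ∈ Set.Ioi (0 : ℝ), 0 ≤ Z t) →
        IntegrableOn (fun t => Z t ^ 2) (Set.Ioi 0) volume →
        (∫ t in Set.Ioi (0 : ℝ), Z t ^ 2) ≤ Y →
        IsOpen M → M ⊆ Set.Ioi 0 →
        (∀ᵐ s ∂(volume.restrict M),
          (∫ t in Set.Ioi s, Z t ^ 2) ^ α ≤ ζ * Z s ^ 2) →
        IntegrableOn Z M volume ∧ (∫ t in M, Z t) ≤ C := by
  set C := 2 * √ζ * (Y / 2) ^ (1 - α / 2) / (1 - (1 / 2) ^ (1 - α / 2))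
  have hC : 0 < C := by
    have : (1 / 2 : ℝ) ^ (1 - α / 2) < 1 :=
      Real.rpow_lt_one (by norm_num) (by norm_num) (by linarith)
    have := Real.sqrt_pos.2 hζ
    have := Real.rpow_pos_of_pos (half_pos hY) (1 - α / 2)
    exact div_pos (by positivity) (by linarith)
  refine ⟨C, hC, fun Z M hZ _ hZ2 hZY hMo hM0 h => ?_⟩
  have hsq_nonneg : ∀ᵐ t ∂volume, 0 ≤ Z t ^ 2 := ae_of_all _ fun t => sq_nonneg (Z t)
  have htail : ∀ s ∈ M, ∫⁻ t in Ioi s, ENNReal.ofReal (Z t ^ 2) ≤ ENNReal.ofReal Y :=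
    fun s hs => calc
      ∫⁻ t in Ioi s, ENNReal.ofReal (Z t ^ 2) ≤ ∫⁻ t in Ioi 0, ENNReal.ofReal (Z t ^ 2) :=
        lintegral_mono_set (Ioi_subset_Ioi (hM0 hs).le)
      _ = ENNReal.ofReal (∫ t in Ioi 0, Z t ^ 2) :=
        (ofReal_integral_eq_lintegral_ofReal hZ2 (ae_restrict_of_ae hsq_nonneg)).symm
      _ ≤ ENNReal.ofReal Y := ENNReal.ofReal_le_ofReal hZY
  have hbound : ∫⁻ s in M, ‖Z s‖ₑ ≤ ENNReal.ofReal C :=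
    lintegral_enorm_le_of_tail_rpow_le hZ.aemeasurable hMo.measurableSet
      ⟨0, fun s hs => (hM0 hs).le⟩ hY (by linarith) hα2 hζ htail <| h.mono fun s hs => by
        rwa [integral_eq_lintegral_of_nonneg_ae (ae_restrict_of_ae hsq_nonneg)
          (hZ.pow_const 2).aestronglyMeasurable] at hs
  refine ⟨⟨hZ.aestronglyMeasurable, hbound.trans_lt ENNReal.ofReal_lt_top⟩, ?_⟩
  have habs := (enorm_integral_le_lintegral_enorm _).trans hbound
  rw [Real.enorm_eq_ofReal_abs, ENNReal.ofReal_le_ofReal_iff hC.le] at habs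
  exact (le_abs_self _).trans habs
end

section
/- Let E : (0,∞) → ℝ be nonincreasing with lim_{t→∞} E(t) = E∞ ∈ ℝ. Let Z : (0,∞) → [0,∞) be measurable with Z ∈ L²(0,∞), and let m* > 0 be such that m* ∫ₛᵗ Z(τ)² dτ ≤ E(s) − E(t) for every t > 0 and almost every s ∈ (0,t]. Assume there exist ϑ ∈ (0,1/2), t* > 0, M > 0 and C > 0 such that for almost every s ≥ t* with Z(s) ≤ M one has (E(s) − E∞)^{1−ϑ} ≤ C·Z(s). Then Z is integrable on (t*,∞), i.e. Z ∈ L¹(t*,∞). -/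
/-!
Let `F s = ∫_{(s,∞)} Z²`. Letting `t → ∞` in the energy inequality gives `m* F ≤ E - E∞`, so the
Łojasiewicz–Simon inequality yields `Z² ≥ min (M², κ F ^ α)` a.e. on `[t*, ∞)` for some `κ > 0`,
with `α = 2 (1 - ϑ) ∈ (1, 2)`. Integrating over `(a, 2a]`, an interval too long to consist of
bad times only once `a ≥ T` is large, gives `κ a F(2a) ^ α ≤ F(a)`, hence `F(T 2ⁿ) = O(ρ⁻ⁿ)`
with `ρ = 2 ^ (1 / (α - 1)) > 2`. By Cauchy–Schwarz,
`∫_{(T 2ⁿ, T 2ⁿ⁺¹]} |Z| ≤ (T 2ⁿ F(T 2ⁿ)) ^ (1/2)`, which is summable.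
-/

open MeasureTheory Set Filter

theorem le_max_of_rpow_le_mul {w : ℕ → ℝ} {α d : ℝ} (hw : ∀ n, 0 ≤ w n) (hα : 1 < α)
    (hd : 0 ≤ d) (h : ∀ n, w (n + 1) ^ α ≤ d * w n) (n : ℕ) :
    w n ≤ max (w 0) (d ^ (α - 1)⁻¹) := by
  set K := max (w 0) (d ^ (α - 1)⁻¹)
  have hK : 0 ≤ K := (hw 0).trans (le_max_left _ _)
  have hdK : d ≤ K ^ (α - 1) := by
    calc d = (d ^ (α - 1)⁻¹) ^ (α - 1) := by
            rw [← Real.rpow_mul hd, inv_mul_cancel₀ (by linarith), Real.rpow_one]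
      _ ≤ K ^ (α - 1) := by gcongr; exact le_max_right _ _
  induction n with
  | zero => exact le_max_left _ _
  | succ n ih =>
    refine (Real.rpow_le_rpow_iff (z := α) (hw _) hK (by linarith)).1 ?_
    calc w (n + 1) ^ α ≤ d * w n := h n
      _ ≤ K ^ (α - 1) * K := mul_le_mul hdK ih (hw n) (by positivity)
      _ = K ^ α := by rw [← Real.rpow_add_one' hK (by linarith)]; ring_nf

theorem summable_sqrt_two_pow_mul {u : ℕ → ℝ} {α c : ℝ} (hu : ∀ n, 0 ≤ u n) (hα₁ : 1 < α)
    (hα₂ : α < 2) (hc : 0 < c) (h : ∀ n, c * 2 ^ n * u (n + 1) ^ α ≤ u n) :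
    Summable fun n => √(2 ^ n * u n) := by
  -- `ρ ^ (α - 1) = 2`, which makes `w n = ρ ^ n * u n` satisfy `w (n + 1) ^ α ≤ (2 ρ / c) w n`.
  set ρ : ℝ := 2 ^ (α - 1)⁻¹
  have hρ : 0 < ρ := by positivity
  have hρα : ρ ^ α = 2 * ρ := by
    have : ρ ^ (α - 1) = 2 := by
      rw [← Real.rpow_mul zero_le_two, inv_mul_cancel₀ (by linarith), Real.rpow_one]
    rw [Real.rpow_sub_one hρ.ne', div_eq_iff hρ.ne'] at this
    exact this
  have hρ2 : 2 < ρ := by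
    have : 1 < (α - 1)⁻¹ := (one_lt_inv₀ (by linarith)).2 (by linarith)
    simpa using Real.rpow_lt_rpow_of_exponent_lt one_lt_two this
  set w : ℕ → ℝ := fun n => ρ ^ n * u n
  have hw : ∀ n, 0 ≤ w n := fun n => mul_nonneg (by positivity) (hu n)
  have hrec : ∀ n, w (n + 1) ^ α ≤ (2 * ρ / c) * w n := by
    intro n
    have e : w (n + 1) ^ α = (2 * ρ) ^ (n + 1) * u (n + 1) ^ α := by
      rw [Real.mul_rpow (by positivity) (hu _), ← Real.rpow_pow_comm hρ.le, hρα]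
    rw [e, div_mul_eq_mul_div, le_div_iff₀ hc]
    calc (2 * ρ) ^ (n + 1) * u (n + 1) ^ α * c
        = (2 * ρ * ρ ^ n) * (c * 2 ^ n * u (n + 1) ^ α) := by ring
      _ ≤ (2 * ρ * ρ ^ n) * u n := by gcongr; exact h n
      _ = 2 * ρ * w n := by ring
  set K := max (w 0) ((2 * ρ / c) ^ (α - 1)⁻¹)
  set r := √(2 / ρ)
  have hr : r ^ 2 = 2 / ρ := Real.sq_sqrt (by positivity)
  have hbound : ∀ n, √(2 ^ n * u n) ≤ √K * r ^ n := by
    intro n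
    have hwK := le_max_of_rpow_le_mul hw hα₁ (by positivity) hrec n
    rw [← Real.sqrt_sq (pow_nonneg (Real.sqrt_nonneg _) n), ← Real.sqrt_mul' _ (by positivity)]
    refine Real.sqrt_le_sqrt ?_
    rw [← pow_mul, mul_comm n 2, pow_mul, hr, div_pow, mul_div_assoc', le_div_iff₀ (by positivity)]
    calc 2 ^ n * u n * ρ ^ n = 2 ^ n * w n := by ring
      _ ≤ K * 2 ^ n := by rw [mul_comm K]; gcongr
  refine Summable.of_nonneg_of_le (fun n => Real.sqrt_nonneg _) hbound
    ((summable_geometric_of_lt_one (Real.sqrt_nonneg _) ?_).mul_left _)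
  rw [Real.sqrt_lt' one_pos, one_pow, div_lt_one hρ]
  exact hρ2

theorem integral_norm_le_sqrt_measureReal_mul {α : Type*} [MeasurableSpace α] {μ : Measure α}
    [IsFiniteMeasure μ] {f : α → ℝ} (hf : MemLp f 2 μ) :
    ∫ x, ‖f x‖ ∂μ ≤ √(μ.real univ * ∫ x, f x ^ 2 ∂μ) := by
  have h := integral_mul_norm_le_Lp_mul_Lq (g := fun _ => (1 : ℝ)) Real.HolderConjugate.two_two
    (by simpa using hf) (by simpa using memLp_const (1 : ℝ))
  simp only [norm_one, mul_one, Real.rpow_two, Real.norm_eq_abs, sq_abs, one_pow,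
    integral_const, smul_eq_mul] at h
  rw [Real.sqrt_eq_rpow, Real.mul_rpow measureReal_nonneg (integral_nonneg fun _ => sq_nonneg _)]
  simpa [mul_comm] using h

theorem integrableOn_Ioc_of_integrableOn_sq {f : ℝ → ℝ} {a b : ℝ} (hf : AEStronglyMeasurable f)
    (hf2 : IntegrableOn (fun x => f x ^ 2) (Ioi a)) : IntegrableOn f (Ioc a b) :=
  ((memLp_two_iff_integrable_sq hf.restrict).2 (hf2.mono_set Ioc_subset_Ioi_self)).integrable
    one_le_two

theorem integral_norm_Ioc_le_sqrt_mul_setIntegral_Ioi {f : ℝ → ℝ} {a b : ℝ} (hab : a ≤ b)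
    (hf : AEStronglyMeasurable f) (hf2 : IntegrableOn (fun x => f x ^ 2) (Ioi a)) :
    ∫ x in Ioc a b, ‖f x‖ ≤ √((b - a) * ∫ x in Ioi a, f x ^ 2) := by
  have hL2 : MemLp f 2 (volume.restrict (Ioc a b)) :=
    (memLp_two_iff_integrable_sq hf.restrict).2 (hf2.mono_set Ioc_subset_Ioi_self)
  refine (integral_norm_le_sqrt_measureReal_mul hL2).trans (Real.sqrt_le_sqrt ?_)
  rw [measureReal_restrict_apply_univ, Real.volume_real_Ioc_of_le hab]
  exact mul_le_mul_of_nonneg_left (setIntegral_mono_set hf2 (ae_of_all _ fun x => sq_nonneg _)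
    Ioc_subset_Ioi_self.eventuallyLE) (sub_nonneg.2 hab)

theorem integrableOn_Ioi_of_summable_integral_norm_Ioc {E : Type*} [NormedAddCommGroup E]
    {f : ℝ → E} {a : ℕ → ℝ} (ha : Tendsto a atTop atTop)
    (hf : ∀ n, IntegrableOn f (Ioc (a n) (a (n + 1))))
    (hs : Summable fun n => ∫ x in Ioc (a n) (a (n + 1)), ‖f x‖) :
    IntegrableOn f (Ioi (a 0)) := by
  refine (integrableOn_iUnion_of_summable_integral_norm hf hs).mono_set fun x hx => ?_
  classical
  have hex : ∃ n, x ≤ a (n + 1) :=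
    ((ha.comp (tendsto_add_atTop_nat 1)).eventually_ge_atTop x).exists
  refine mem_iUnion.2 ⟨Nat.find hex, ?_, Nat.find_spec hex⟩
  rcases h : Nat.find hex with _ | n
  · exact hx
  · exact not_le.1 (Nat.find_min hex (h ▸ n.lt_succ_self))

theorem integrableOn_Ioi_of_tail_sq_doubling {f : ℝ → ℝ} {T c α : ℝ} (hT : 0 < T) (hc : 0 < c)
    (hα₁ : 1 < α) (hα₂ : α < 2) (hf : AEStronglyMeasurable f)
    (hf2 : IntegrableOn (fun x => f x ^ 2) (Ioi T))
    (h : ∀ a, T ≤ a → c * a * (∫ x in Ioi (2 * a), f x ^ 2) ^ α ≤ ∫ x in Ioi a, f x ^ 2) :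
    IntegrableOn f (Ioi T) := by
  set F : ℝ → ℝ := fun s => ∫ x in Ioi s, f x ^ 2
  set a : ℕ → ℝ := fun n => T * 2 ^ n
  have hTa : ∀ n, T ≤ a n := fun n => le_mul_of_one_le_right hT.le (one_le_pow₀ one_le_two)
  have hsucc : ∀ n, a (n + 1) = 2 * a n := fun n => by simp only [a]; ring
  have hf2a : ∀ n, IntegrableOn (fun x => f x ^ 2) (Ioi (a n)) :=
    fun n => hf2.mono_set (Ioi_subset_Ioi (hTa n))
  have hsum : Summable fun n => √(2 ^ n * F (a n)) := by
    refine summable_sqrt_two_pow_mul (c := c * T) (fun n => ?_) hα₁ hα₂ (by positivity) fun n => ?_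
    · exact setIntegral_nonneg measurableSet_Ioi fun x _ => sq_nonneg _
    · simpa only [hsucc, a, mul_assoc] using h (a n) (hTa n)
  have ha : Tendsto a atTop atTop :=
    (tendsto_pow_atTop_atTop_of_one_lt one_lt_two).const_mul_atTop hT
  have hpiece : ∀ n, ∫ x in Ioc (a n) (a (n + 1)), ‖f x‖ ≤ √T * √(2 ^ n * F (a n)) := by
    intro n
    have h := integral_norm_Ioc_le_sqrt_mul_setIntegral_Ioi (b := a (n + 1))
      (by rw [hsucc]; linarith [hTa n]) hf (hf2a n)
    rw [hsucc, two_mul, add_sub_cancel_right, mul_assoc, Real.sqrt_mul hT.le] at h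
    rwa [hsucc, two_mul]
  have hIoi := integrableOn_Ioi_of_summable_integral_norm_Ioc ha
    (fun n => integrableOn_Ioc_of_integrableOn_sq hf (hf2a n))
    (.of_nonneg_of_le (fun n => integral_nonneg fun _ => norm_nonneg _) hpiece (hsum.mul_left √T))
  simpa only [a, pow_zero, mul_one] using hIoi

theorem ae_mul_setIntegral_Ioi_le_sub {g E : ℝ → ℝ} {e m : ℝ} (hg : IntegrableOn g (Ioi 0))
    (hE : Tendsto E atTop (nhds e))
    (h : ∀ t > (0 : ℝ), ∀ᵐ s ∂(volume.restrict (Ioc 0 t)), m * ∫ τ in Ioc s t, g τ ≤ E s - E t) :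
    ∀ᵐ s, 0 < s → m * ∫ τ in Ioi s, g τ ≤ E s - e := by
  have h' : ∀ᵐ s, ∀ n : ℕ, s ∈ Ioc 0 ((n : ℝ) + 1) →
      m * ∫ τ in Ioc s ((n : ℝ) + 1), g τ ≤ E s - E ((n : ℝ) + 1) :=
    ae_all_iff.2 fun n => (ae_restrict_iff' measurableSet_Ioc).1 (h _ (by positivity))
  filter_upwards [h'] with s hs hs0
  have hn : Tendsto (fun n : ℕ => (n : ℝ) + 1) atTop atTop :=
    tendsto_atTop_add_const_right _ 1 tendsto_natCast_atTop_atTop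
  refine le_of_tendsto_of_tendsto
    ((intervalIntegral_tendsto_integral_Ioi s (hg.mono_set (Ioi_subset_Ioi hs0.le)) hn).const_mul m)
    (tendsto_const_nhds.sub (hE.comp hn)) ?_
  filter_upwards [hn.eventually_ge_atTop s] with n hsn
  rw [intervalIntegral.integral_of_le hsn]
  exact hs n ⟨hs0, hsn⟩

theorem min_sq_le_sq_of_rpow_le {z e x m M C p : ℝ} (hM : 0 ≤ M) (hC : 0 < C) (hm : 0 ≤ m)
    (hx : 0 ≤ x) (hp : 0 ≤ p) (hxe : m * x ≤ e) (h : z ≤ M → e ^ p ≤ C * z) :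
    min (M ^ 2) (m ^ (2 * p) / C ^ 2 * x ^ (2 * p)) ≤ z ^ 2 := by
  rcases le_or_gt z M with hzM | hMz
  · have hle : (m * x) ^ p / C ≤ z := by
      rw [div_le_iff₀' hC]
      exact (Real.rpow_le_rpow (by positivity) hxe hp).trans (h hzM)
    have heq : m ^ (2 * p) / C ^ 2 * x ^ (2 * p) = ((m * x) ^ p / C) ^ 2 := by
      rw [div_pow, ← Real.rpow_mul_natCast (by positivity), Real.mul_rpow hm hx]
      push_cast
      ring_nf
    rw [heq]
    exact min_le_of_right_le (pow_le_pow_left₀ (by positivity) hle 2)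
  · exact min_le_of_left_le (pow_le_pow_left₀ hM hMz.le 2)

theorem mul_rpow_setIntegral_Ioi_le {g : ℝ → ℝ} {t a b L κ α : ℝ} (hg : IntegrableOn g (Ioi t))
    (hg₀ : ∀ s, 0 ≤ g s) (hκ : 0 ≤ κ) (hα : 0 ≤ α)
    (hlow : ∀ᵐ s, t ≤ s → min L (κ * (∫ τ in Ioi s, g τ) ^ α) ≤ g s)
    (hta : t ≤ a) (hab : a ≤ b) (hL : ∫ τ in Ioi t, g τ < (b - a) * L) :
    κ * (b - a) * (∫ τ in Ioi b, g τ) ^ α ≤ ∫ τ in Ioi a, g τ := by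
  set F : ℝ → ℝ := fun s => ∫ τ in Ioi s, g τ
  have hF_anti : ∀ s s', t ≤ s → s ≤ s' → F s' ≤ F s := fun s s' hs hss' =>
    setIntegral_mono_set (hg.mono_set (Ioi_subset_Ioi hs)) (ae_of_all _ fun τ => hg₀ τ)
      (Ioi_subset_Ioi hss').eventuallyLE
  have hmin : ∀ᵐ s ∂(volume.restrict (Ioc a b)), min L (κ * F b ^ α) ≤ g s := by
    rw [ae_restrict_iff' measurableSet_Ioc]
    filter_upwards [hlow] with s hs hsab
    have hts : t ≤ s := hta.trans hsab.1.le
    refine le_trans (min_le_min le_rfl ?_) (hs hts)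
    gcongr
    · exact setIntegral_nonneg measurableSet_Ioi fun τ _ => hg₀ τ
    · exact hF_anti s b hts hsab.2
  have hint : (b - a) * min L (κ * F b ^ α) ≤ F a :=
    calc (b - a) * min L (κ * F b ^ α) = ∫ _ in Ioc a b, min L (κ * F b ^ α) := by
          rw [setIntegral_const, Real.volume_real_Ioc_of_le hab, smul_eq_mul]
      _ ≤ ∫ s in Ioc a b, g s :=
          integral_mono_ae (integrableOn_const measure_Ioc_lt_top.ne)
            (hg.mono_set fun s hs => hta.trans_lt hs.1) hmin
      _ ≤ F a := setIntegral_mono_set (hg.mono_set (Ioi_subset_Ioi hta))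
            (ae_of_all _ fun τ => hg₀ τ) Ioc_subset_Ioi_self.eventuallyLE
  have hminL : min L (κ * F b ^ α) < L := by
    refine lt_of_mul_lt_mul_left ?_ (sub_nonneg.2 hab)
    exact hint.trans_lt ((hF_anti t a le_rfl hta).trans_lt hL)
  rw [min_lt_iff, lt_self_iff_false, false_or] at hminL
  rw [min_eq_right hminL.le] at hint
  linarith

theorem stmt7_general (E : ℝ → ℝ) (Einf : ℝ) (Z : ℝ → ℝ) (mstar ϑ tstar M C : ℝ)
    (hElim : Tendsto E atTop (nhds Einf))
    (hZmeas : Measurable Z)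
    (hZL2 : IntegrableOn (fun t => Z t ^ 2) (Set.Ioi 0) volume)
    (hm : 0 < mstar)
    (henergy : ∀ t > (0 : ℝ), ∀ᵐ s ∂(volume.restrict (Set.Ioc 0 t)),
        mstar * ∫ τ in Set.Ioc s t, Z τ ^ 2 ≤ E s - E t)
    (hϑ : ϑ ∈ Set.Ioo (0 : ℝ) (1 / 2)) (ht : 0 < tstar) (hM : 0 < M) (hC : 0 < C)
    (hLS : ∀ᵐ s ∂(volume.restrict (Set.Ici tstar)),
        Z s ≤ M → (E s - Einf) ^ (1 - ϑ) ≤ C * Z s) :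
    IntegrableOn Z (Set.Ioi tstar) volume := by
  obtain ⟨hϑ₀, hϑ₂⟩ := hϑ
  set F : ℝ → ℝ := fun s => ∫ τ in Ioi s, Z τ ^ 2
  set κ := mstar ^ (2 * (1 - ϑ)) / C ^ 2
  have hZ2 : IntegrableOn (fun τ => Z τ ^ 2) (Ioi tstar) := hZL2.mono_set (Ioi_subset_Ioi ht.le)
  have hlower : ∀ᵐ s, tstar ≤ s → min (M ^ 2) (κ * F s ^ (2 * (1 - ϑ))) ≤ Z s ^ 2 := by
    filter_upwards [ae_mul_setIntegral_Ioi_le_sub hZL2 hElim henergy,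
      (ae_restrict_iff' measurableSet_Ici).1 hLS] with s hEs hLSs hs
    exact min_sq_le_sq_of_rpow_le hM.le hC hm.le
      (setIntegral_nonneg measurableSet_Ioi fun τ _ => sq_nonneg _) (by linarith)
      (hEs (ht.trans_le hs)) (hLSs hs)
  -- Past `T` the doubling intervals are too long to consist of bad times only.
  set T := max tstar (F tstar / M ^ 2 + 1)
  have hT : tstar ≤ T := le_max_left _ _
  have hTM : F tstar < T * M ^ 2 := by
    rw [← div_lt_iff₀ (by positivity)]
    exact (lt_add_one _).trans_le (le_max_right _ _)
  have hIoi : IntegrableOn Z (Ioi T) := by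
    refine integrableOn_Ioi_of_tail_sq_doubling (c := κ) (α := 2 * (1 - ϑ)) (ht.trans_le hT)
      (by positivity) (by linarith) (by linarith) hZmeas.aestronglyMeasurable
      (hZ2.mono_set (Ioi_subset_Ioi hT)) fun a ha => ?_
    have hL : F tstar < (2 * a - a) * M ^ 2 := by nlinarith
    simpa only [two_mul, add_sub_cancel_right] using mul_rpow_setIntegral_Ioi_le hZ2
      (fun s => sq_nonneg _) (by positivity) (by linarith) hlower (hT.trans ha) (by linarith) hL
  rw [← Ioc_union_Ioi_eq_Ioi hT]
  exact (integrableOn_Ioc_of_integrableOn_sq hZmeas.aestronglyMeasurable hZ2).union hIoi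

/-- **Łojasiewicz–Simon argument on the set of good times.**
Let `E` be nonincreasing on `(0,∞)` with `E(t) → E∞`, let `Z ≥ 0` be in `L²(0,∞)`, and
assume the energy inequality `m* ∫ₛᵗ Z² ≤ E(s) − E(t)` for all `t > 0` and a.e.
`s ∈ (0,t]`. If for some `ϑ ∈ (0,1/2)`, `t* > 0`, `M > 0`, `C > 0` the Łojasiewicz–Simon
inequality `(E(s) − E∞)^{1−ϑ} ≤ C Z(s)` holds for a.e. `s ≥ t*` with `Z(s) ≤ M`
(the "good" times), then `Z ∈ L¹(t*,∞)`. -/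
theorem stmt7 (E : ℝ → ℝ) (Einf : ℝ) (Z : ℝ → ℝ) (mstar ϑ tstar M C : ℝ)
    (hE : AntitoneOn E (Set.Ioi 0))
    (hElim : Tendsto E atTop (nhds Einf))
    (hZmeas : Measurable Z)
    (hZnn : ∀ t ∈ Set.Ioi (0 : ℝ), 0 ≤ Z t)
    (hZL2 : IntegrableOn (fun t => Z t ^ 2) (Set.Ioi 0) volume)
    (hm : 0 < mstar)
    (henergy : ∀ t > (0 : ℝ), ∀ᵐ s ∂(volume.restrict (Set.Ioc 0 t)),
        mstar * ∫ τ in Set.Ioc s t, Z τ ^ 2 ≤ E s - E t)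
    (hϑ : ϑ ∈ Set.Ioo (0 : ℝ) (1 / 2)) (ht : 0 < tstar) (hM : 0 < M) (hC : 0 < C)
    (hLS : ∀ᵐ s ∂(volume.restrict (Set.Ici tstar)),
        Z s ≤ M → (E s - Einf) ^ (1 - ϑ) ≤ C * Z s) :
    IntegrableOn Z (Set.Ioi tstar) volume :=
  stmt7_general E Einf Z mstar ϑ tstar M C hElim hZmeas hZL2 hm henergy hϑ ht hM hC hLS
end

section
/- Let W : (0,∞) → [0,∞) be measurable with W ∈ L²(0,∞), let g : (0,∞) → [0,∞) be measurable with g ∈ L²(0,∞), and let constants 0 < a ≤ b be given. Assume that for every t > 0 and almost every s ∈ (0,t] one has a·W(t)² ≤ b·W(s)² + (∫ₛᵗ W(τ)² dτ)^{1/2} · (∫ₛᵗ g(τ)² dτ)^{1/2}. Then W(t) → 0 as t → ∞. -/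
open MeasureTheory Set Filter Topology

/-! Averaging over the unit window `(t - 1, t]` yields a time `s` at which the hypothesis holds
and `W(s)²` is at most the mean of `W²` on the window. Every integral in the resulting bound for
`a W(t)²` is then dominated by a tail `∫_{t-1}^∞ W²` or `∫_{t-1}^∞ g²`, and these tend to 0. -/

theorem exists_mem_le_setAverage_of_ae {α : Type*} [MeasurableSpace α] {μ : Measure α}
    {s : Set α} {f : α → ℝ} {p : α → Prop} (hs : MeasurableSet s) (hμ : μ s ≠ 0)
    (hμ₁ : μ s ≠ ⊤) (hf : IntegrableOn f s μ) (hp : ∀ᵐ x ∂μ.restrict s, p x) :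
    ∃ x ∈ s, p x ∧ f x ≤ ⨍ a in s, f a ∂μ := by
  have : Fact (μ s < ⊤) := ⟨hμ₁.lt_top⟩
  have hne : μ.restrict s ≠ 0 := by rwa [Ne, Measure.restrict_eq_zero]
  have hnull : μ.restrict s {x | ¬(x ∈ s ∧ p x)} = 0 := by
    rw [← ae_iff]
    filter_upwards [ae_restrict_mem hs, hp] with x hxs hxp using ⟨hxs, hxp⟩
  obtain ⟨x, hx, hfx⟩ := exists_notMem_null_le_average hne hf hnull
  obtain ⟨hxs, hxp⟩ := not_not.mp hx
  exact ⟨x, hxs, hxp, hfx⟩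

theorem mul_sq_le_of_ae_energy_ineq {W g : ℝ → ℝ} {a b : ℝ}
    (hWL2 : IntegrableOn (fun t => W t ^ 2) (Ioi 0) volume)
    (hgL2 : IntegrableOn (fun t => g t ^ 2) (Ioi 0) volume) (hb : 0 ≤ b) {t : ℝ} (ht : 1 ≤ t)
    (hineq : ∀ᵐ s ∂(volume.restrict (Ioc 0 t)),
        a * W t ^ 2 ≤ b * W s ^ 2 +
          (∫ τ in Ioc s t, W τ ^ 2) ^ ((1 : ℝ) / 2) *
            (∫ τ in Ioc s t, g τ ^ 2) ^ ((1 : ℝ) / 2)) :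
    a * W t ^ 2 ≤ b * (∫ τ in Ioi (t - 1), W τ ^ 2) +
      (∫ τ in Ioi (t - 1), W τ ^ 2) ^ ((1 : ℝ) / 2) *
        (∫ τ in Ioi (t - 1), g τ ^ 2) ^ ((1 : ℝ) / 2) := by
  have hsub : Ioc (t - 1) t ⊆ Ioc 0 t := Ioc_subset_Ioc (by linarith) le_rfl
  have tail_le : ∀ {f : ℝ → ℝ}, IntegrableOn (fun t => f t ^ 2) (Ioi 0) volume →
      ∀ {u : Set ℝ}, u ⊆ Ioi (t - 1) → ∫ τ in u, f τ ^ 2 ≤ ∫ τ in Ioi (t - 1), f τ ^ 2 :=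
    fun hf _ hu => setIntegral_mono_set (hf.mono_set (Ioi_subset_Ioi (by linarith)))
      (Eventually.of_forall fun _ => sq_nonneg _) hu.eventuallyLE
  have hvol : volume (Ioc (t - 1) t) = 1 := by simp
  obtain ⟨s, hs, hineq_s, hWs⟩ := exists_mem_le_setAverage_of_ae measurableSet_Ioc
    (by simp [hvol]) (by simp [hvol]) (hWL2.mono_set (hsub.trans Ioc_subset_Ioi_self))
    (ae_restrict_of_ae_restrict_of_subset hsub hineq)
  have hWs_le_tail : W s ^ 2 ≤ ∫ τ in Ioi (t - 1), W τ ^ 2 := calc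
    W s ^ 2 ≤ ⨍ τ in Ioc (t - 1) t, W τ ^ 2 := hWs
    _ = ∫ τ in Ioc (t - 1) t, W τ ^ 2 := by simp [setAverage_eq, measureReal_def, hvol]
    _ ≤ _ := tail_le hWL2 Ioc_subset_Ioi_self
  have hIoc : Ioc s t ⊆ Ioi (t - 1) := fun τ hτ => hs.1.trans hτ.1
  have int_nonneg : ∀ f : ℝ → ℝ, 0 ≤ ∫ τ in Ioc s t, f τ ^ 2 :=
    fun f => setIntegral_nonneg measurableSet_Ioc fun _ _ => sq_nonneg _
  calc a * W t ^ 2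
      ≤ b * W s ^ 2 + (∫ τ in Ioc s t, W τ ^ 2) ^ ((1 : ℝ) / 2) *
          (∫ τ in Ioc s t, g τ ^ 2) ^ ((1 : ℝ) / 2) := hineq_s
    _ ≤ _ := by
      gcongr b * ?_ + ?_ * ?_
      · exact Real.rpow_le_rpow (int_nonneg W) (tail_le hWL2 hIoc) (by norm_num)
      · exact Real.rpow_le_rpow (int_nonneg g) (tail_le hgL2 hIoc) (by norm_num)

theorem stmt10_general (W g : ℝ → ℝ) (a b : ℝ)
    (hWL2 : IntegrableOn (fun t => W t ^ 2) (Set.Ioi 0) volume)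
    (hgL2 : IntegrableOn (fun t => g t ^ 2) (Set.Ioi 0) volume)
    (ha : 0 < a) (hab : a ≤ b)
    (hineq : ∀ t > (0 : ℝ), ∀ᵐ s ∂(volume.restrict (Set.Ioc 0 t)),
        a * W t ^ 2 ≤ b * W s ^ 2 +
          (∫ τ in Set.Ioc s t, W τ ^ 2) ^ ((1 : ℝ) / 2) *
            (∫ τ in Set.Ioc s t, g τ ^ 2) ^ ((1 : ℝ) / 2)) :
    Tendsto W atTop (nhds 0) := by
  have tail : ∀ f : ℝ → ℝ, Tendsto (fun t => ∫ τ in Ioi (t - 1), f τ ^ 2) atTop (𝓝 0) :=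
    fun f => tendsto_integral_Ioi_zero (tendsto_atTop_add_const_right _ _ tendsto_id)
  have hbound : Tendsto (fun t => (b * (∫ τ in Ioi (t - 1), W τ ^ 2) +
      (∫ τ in Ioi (t - 1), W τ ^ 2) ^ ((1 : ℝ) / 2) *
        (∫ τ in Ioi (t - 1), g τ ^ 2) ^ ((1 : ℝ) / 2)) / a) atTop (𝓝 0) := by
    simpa using ((((tail W).const_mul b).add (((tail W).rpow_const (Or.inr one_half_pos.le)).mul
      ((tail g).rpow_const (Or.inr one_half_pos.le)))).div_const a)
  have hW2 : Tendsto (fun t => W t ^ 2) atTop (𝓝 0) := by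
    refine squeeze_zero' (.of_forall fun t => sq_nonneg _) ?_ hbound
    filter_upwards [eventually_ge_atTop 1] with t ht
    rw [le_div_iff₀' ha]
    exact mul_sq_le_of_ae_energy_ineq hWL2 hgL2 (ha.le.trans hab) ht (hineq t (by linarith))
  have habs : Tendsto (fun t => |W t|) atTop (𝓝 0) := by
    simpa [Real.sqrt_sq_eq_abs] using hW2.sqrt
  exact (tendsto_zero_iff_abs_tendsto_zero W).mpr habs

/-- **Decay of the kinetic energy.**
Let `W, g ≥ 0` be measurable with `W, g ∈ L²(0,∞)` and `0 < a ≤ b`. If for every `t > 0`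
and almost every `s ∈ (0,t]` one has
`a W(t)² ≤ b W(s)² + (∫ₛᵗ W²)^{1/2} (∫ₛᵗ g²)^{1/2}`, then `W(t) → 0` as `t → ∞`. -/
theorem stmt10 (W g : ℝ → ℝ) (a b : ℝ)
    (hWmeas : Measurable W) (hWnn : ∀ t ∈ Set.Ioi (0 : ℝ), 0 ≤ W t)
    (hWL2 : IntegrableOn (fun t => W t ^ 2) (Set.Ioi 0) volume)
    (hgmeas : Measurable g) (hgnn : ∀ t ∈ Set.Ioi (0 : ℝ), 0 ≤ g t)
    (hgL2 : IntegrableOn (fun t => g t ^ 2) (Set.Ioi 0) volume)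
    (ha : 0 < a) (hab : a ≤ b)
    (hineq : ∀ t > (0 : ℝ), ∀ᵐ s ∂(volume.restrict (Set.Ioc 0 t)),
        a * W t ^ 2 ≤ b * W s ^ 2 +
          (∫ τ in Set.Ioc s t, W τ ^ 2) ^ ((1 : ℝ) / 2) *
            (∫ τ in Set.Ioc s t, g τ ^ 2) ^ ((1 : ℝ) / 2)) :
    Tendsto W atTop (nhds 0) :=
  stmt10_general W g a b hWL2 hgL2 ha hab hineq
end
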